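/- arXiv:1408.2214 — 5 statements merged into one kernel-verified Lean document; each statement's English description precedes it below -/
import Mathlib

section
/- With the same setup as Lemma 1 (exact L-value for an M-PAM constellation with a bit pattern, ρ > 0 fixed), if l(y_0 + y) = l(y_0 - y) for all y ∈ ℝ, then the constellation is symmetric around y_0 and the pattern is reflection-symmetric. Concretely: writing the points of S_1 as d_1 < ... < d_{M/2} and the points of S_0 as t_1 < ... < t_{M/2}, the symmetry of l around y_0 implies d_i - y_0 = -(d_{M/2+1-i} - y_0) for all i and t_j - y_0 = -(t_{M/2+1-j} - y_0) for all j. -/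
/-!
Translate by `y0` and let `A`, `B` be the shifted point sets of `S_1`, `S_0`. Expanding the
squares, the symmetry of `l` says `P(z) Q(-z) = P(-z) Q(z)` for the exponential sums
`P(z) = ∑_{a ∈ A} e^{-ρa²} e^{az}` and `Q(z) = ∑_{b ∈ B} e^{-ρb²} e^{bz}`. By linear independence
of exponentials this is an identity `P Q̃ = P̃ Q` in the group algebra `ℝ[ℝ]`, where `~` reflects
the exponents. Comparing the top terms of both sides gives
`max A + max (-B) = max (-A) + max B` and the corresponding identity between Gaussian weights;
since `x + y` and `x² + y²` determine `{x, y}` and `max A ≠ max B`, this forces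
`max (-B) = max B`. Next, `P (Q - Q̃) = (P - P̃) Q`: if `P ≠ P̃`, the same comparison puts the top
term of `Q - Q̃` at `max B`, where it vanishes because `max B ∈ -B`. Hence `P = P̃`, then `Q = Q̃`,
i.e. `A = -A` and `B = -B`; for sorted points this is `a_i = -a_{n+1-i}`.
-/

open Real Finset AddMonoidAlgebra
open scoped Pointwise

noncomputable def expChar (z : ℝ) : Multiplicative ℝ →* ℝ :=
  Real.expMonoidHom.comp (AddMonoidHom.mulRight z).toMultiplicative

/-- Reads `w : ℝ[ℝ]` as the exponential sum `∑ₐ w a · e^{a z}`. -/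
noncomputable def expEval (z : ℝ) : ℝ[ℝ] →ₐ[ℝ] ℝ := lift ℝ ℝ ℝ (expChar z)

lemma expChar_apply (z : ℝ) (a : Multiplicative ℝ) : expChar z a = exp (a.toAdd * z) := rfl

lemma expEval_single (z a r : ℝ) : expEval z (single a r) = r * exp (a * z) := by
  simp [expEval, expChar_apply]

lemma expEval_apply (z : ℝ) (w : ℝ[ℝ]) :
    expEval z w = w.coeff.sum fun a r => r * exp (a * z) := by
  simp [expEval, lift_apply, expChar_apply]

/-- Dedekind's independence of the characters `expChar a`. -/
lemma eq_zero_of_forall_expEval_eq_zero {w : ℝ[ℝ]} (h : ∀ z, expEval z w = 0) : w = 0 := by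
  have hinj : Function.Injective expChar := fun a b hab => by
    simpa [expChar_apply] using DFunLike.congr_fun hab (Multiplicative.ofAdd 1)
  have hli := (linearIndependent_monoidHom (Multiplicative ℝ) ℝ).comp _ hinj
  refine coeff_eq_zero.mp (linearIndependent_iff.mp hli w.coeff (funext fun m => ?_))
  rw [Finsupp.linearCombination_apply, Finsupp.sum, Finset.sum_apply, Pi.zero_apply,
    ← h m.toAdd, expEval_apply]
  simp [Finsupp.sum, expChar_apply, mul_comm]

lemma isGreatest_support_mul {R A : Type*} [Semiring R] [NoZeroDivisors R]
    [AddCancelCommMonoid A] [LinearOrder A] [IsOrderedCancelAddMonoid A] {f g : R[A]} {x y : A}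
    (hf : IsGreatest (f.coeff.support : Set A) x) (hg : IsGreatest (g.coeff.support : Set A) y) :
    IsGreatest ((f * g).coeff.support : Set A) (x + y) ∧
      (f * g).coeff (x + y) = f.coeff x * g.coeff y := by
  classical
  have hunique : UniqueAdd f.coeff.support g.coeff.support x y := by
    intro a b ha hb hab
    have hax : a ≤ x := hf.2 ha
    have hby : b ≤ y := hg.2 hb
    constructor
    · by_contra hne
      exact (add_lt_add_of_lt_of_le (lt_of_le_of_ne hax hne) hby).ne hab
    · by_contra hne
      exact (add_lt_add_of_le_of_lt hax (lt_of_le_of_ne hby hne)).ne hab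
  have hcoeff := coeff_mul_add_of_uniqueAdd hunique
  refine ⟨⟨?_, fun z hz => ?_⟩, hcoeff⟩
  · rw [Finset.mem_coe, Finsupp.mem_support_iff, hcoeff]
    exact mul_ne_zero (Finsupp.mem_support_iff.mp hf.1) (Finsupp.mem_support_iff.mp hg.1)
  · obtain ⟨a, ha, b, hb, rfl⟩ := Finset.mem_add.mp (support_coeff_mul_subset f g hz)
    exact add_le_add (hf.2 ha) (hg.2 hb)

lemma add_eq_add_and_coeff_mul_eq_of_mul_eq {R A : Type*} [Semiring R] [NoZeroDivisors R]
    [AddCancelCommMonoid A] [LinearOrder A] [IsOrderedCancelAddMonoid A] {p q r s : R[A]}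
    {x y u v : A} (hp : IsGreatest (p.coeff.support : Set A) x)
    (hq : IsGreatest (q.coeff.support : Set A) y) (hr : IsGreatest (r.coeff.support : Set A) u)
    (hs : IsGreatest (s.coeff.support : Set A) v) (h : p * q = r * s) :
    x + y = u + v ∧ p.coeff x * q.coeff y = r.coeff u * s.coeff v := by
  obtain ⟨hpq, hpq_coeff⟩ := isGreatest_support_mul hp hq
  obtain ⟨hrs, hrs_coeff⟩ := isGreatest_support_mul hr hs
  rw [h] at hpq
  have hsum := hpq.unique hrs
  refine ⟨hsum, ?_⟩
  rw [← hpq_coeff, ← hrs_coeff, h, hsum]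

lemma isGreatest_support_max' {R A : Type*} [Semiring R] [LinearOrder A] {f : R[A]}
    (hf : f ≠ 0) :
    IsGreatest (f.coeff.support : Set A)
      (f.coeff.support.max' (Finsupp.support_nonempty_iff.mpr (mt coeff_eq_zero.mp hf))) :=
  isGreatest_max' _ _

lemma eq_or_eq_of_add_eq_of_sq_add_sq_eq {x y u v : ℝ} (hsum : x + y = u + v)
    (hsq : x ^ 2 + y ^ 2 = u ^ 2 + v ^ 2) : x = u ∨ x = v := by
  have h : (x - u) * (x - v) = 0 := by
    linear_combination (1 / 2) * hsq - (1 / 2) * (y + u + v - x) * hsum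
  rcases mul_eq_zero.mp h with h | h
  · exact Or.inl (sub_eq_zero.mp h)
  · exact Or.inr (sub_eq_zero.mp h)

noncomputable def gaussianAtoms (ρ : ℝ) (s : Finset ℝ) : ℝ[ℝ] :=
  ∑ x ∈ s, single x (exp (-ρ * x ^ 2))

section GaussianAtoms

variable {ρ : ℝ}

lemma coeff_gaussianAtoms (s : Finset ℝ) (x : ℝ) :
    (gaussianAtoms ρ s).coeff x = if x ∈ s then exp (-ρ * x ^ 2) else 0 := by
  simp [gaussianAtoms, coeff_sum, coeff_single, Finsupp.single_apply]

lemma support_gaussianAtoms (s : Finset ℝ) : (gaussianAtoms ρ s).coeff.support = s := by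
  ext x
  simp [coeff_gaussianAtoms, (exp_pos _).ne']

lemma gaussianAtoms_injective : Function.Injective (gaussianAtoms ρ) := fun s t h => by
  rw [← support_gaussianAtoms (ρ := ρ) s, h, support_gaussianAtoms]

lemma gaussianAtoms_ne_zero {s : Finset ℝ} (hs : s.Nonempty) : gaussianAtoms ρ s ≠ 0 :=
  fun h => hs.ne_empty (gaussianAtoms_injective (h.trans sum_empty.symm))

lemma expEval_gaussianAtoms (z : ℝ) (s : Finset ℝ) :
    expEval z (gaussianAtoms ρ s) = ∑ x ∈ s, exp (-ρ * x ^ 2) * exp (x * z) := by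
  simp [gaussianAtoms, expEval_single]

lemma sum_exp_neg_mul_sub_sq (y : ℝ) (s : Finset ℝ) :
    ∑ x ∈ s, exp (-ρ * (y - x) ^ 2) =
      exp (-ρ * y ^ 2) * expEval (2 * ρ * y) (gaussianAtoms ρ s) := by
  rw [expEval_gaussianAtoms, mul_sum]
  refine sum_congr rfl fun x _ => ?_
  rw [← exp_add, ← exp_add]
  ring_nf

lemma gaussianAtoms_mul_eq_of_forall_sum_exp (hρ : ρ ≠ 0) {A B A' B' : Finset ℝ}
    (h : ∀ y : ℝ, (∑ x ∈ A, exp (-ρ * (y - x) ^ 2)) * ∑ x ∈ B, exp (-ρ * (y - x) ^ 2) =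
      (∑ x ∈ A', exp (-ρ * (y - x) ^ 2)) * ∑ x ∈ B', exp (-ρ * (y - x) ^ 2)) :
    gaussianAtoms ρ A * gaussianAtoms ρ B = gaussianAtoms ρ A' * gaussianAtoms ρ B' := by
  rw [← sub_eq_zero]
  refine eq_zero_of_forall_expEval_eq_zero fun z => ?_
  have hz := h (z / (2 * ρ))
  simp only [sum_exp_neg_mul_sub_sq, show 2 * ρ * (z / (2 * ρ)) = z by field_simp] at hz
  rw [map_sub, map_mul, map_mul, sub_eq_zero]
  refine mul_left_cancel₀ (by positivity : exp (-ρ * (z / (2 * ρ)) ^ 2) ^ 2 ≠ 0) ?_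
  linear_combination hz

lemma isGreatest_support_gaussianAtoms {s : Finset ℝ} (hs : s.Nonempty) :
    IsGreatest ((gaussianAtoms ρ s).coeff.support : Set ℝ) (s.max' hs) := by
  rw [support_gaussianAtoms]
  exact isGreatest_max' s hs

lemma abs_coeff_gaussianAtoms_max' {s : Finset ℝ} (hs : s.Nonempty) :
    |(gaussianAtoms ρ s).coeff (s.max' hs)| = exp (-ρ * s.max' hs ^ 2) := by
  rw [coeff_gaussianAtoms, if_pos (max'_mem s hs), abs_of_pos (exp_pos _)]

lemma abs_coeff_gaussianAtoms_sub {s t : Finset ℝ} {x : ℝ}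
    (hx : (gaussianAtoms ρ s - gaussianAtoms ρ t).coeff x ≠ 0) :
    |(gaussianAtoms ρ s - gaussianAtoms ρ t).coeff x| = exp (-ρ * x ^ 2) := by
  simp only [coeff_sub, Finsupp.sub_apply, coeff_gaussianAtoms] at hx ⊢
  split_ifs at hx ⊢ <;> simp_all

lemma eq_or_eq_of_add_eq_of_exp_mul_eq (hρ : ρ ≠ 0) {x y u v : ℝ} (hsum : x + y = u + v)
    (hprod : exp (-ρ * x ^ 2) * exp (-ρ * y ^ 2) = exp (-ρ * u ^ 2) * exp (-ρ * v ^ 2)) :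
    x = u ∨ x = v := by
  rw [← exp_add, ← exp_add, exp_eq_exp] at hprod
  refine eq_or_eq_of_add_eq_of_sq_add_sq_eq hsum (mul_left_cancel₀ (neg_ne_zero.mpr hρ) ?_)
  linear_combination hprod

lemma top_eq_of_gaussianAtoms_mul_eq (hρ : ρ ≠ 0) {A B : Finset ℝ} (hA : A.Nonempty)
    (hB : B.Nonempty) (hAB : A.max' hA ≠ B.max' hB) {q r : ℝ[ℝ]} {x y : ℝ}
    (hq : IsGreatest (q.coeff.support : Set ℝ) x) (hr : IsGreatest (r.coeff.support : Set ℝ) y)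
    (hqx : |q.coeff x| = exp (-ρ * x ^ 2)) (hry : |r.coeff y| = exp (-ρ * y ^ 2))
    (h : gaussianAtoms ρ A * q = r * gaussianAtoms ρ B) :
    y = A.max' hA ∧ x = B.max' hB := by
  obtain ⟨hsum, hcoeff⟩ := add_eq_add_and_coeff_mul_eq_of_mul_eq
    (isGreatest_support_gaussianAtoms hA) hq hr (isGreatest_support_gaussianAtoms hB) h
  have habs := congrArg abs hcoeff
  rw [abs_mul, abs_mul, hqx, hry, abs_coeff_gaussianAtoms_max', abs_coeff_gaussianAtoms_max']
    at habs
  rcases eq_or_eq_of_add_eq_of_exp_mul_eq hρ hsum habs with h | h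
  · exact ⟨h.symm, by linarith⟩
  · exact absurd h hAB

lemma max'_neg_eq_of_gaussianAtoms_mul_eq (hρ : ρ ≠ 0) {A B : Finset ℝ} (hA : A.Nonempty)
    (hB : B.Nonempty) (hAB : A.max' hA ≠ B.max' hB)
    (h : gaussianAtoms ρ A * gaussianAtoms ρ (-B) = gaussianAtoms ρ (-A) * gaussianAtoms ρ B) :
    (-B).max' hB.neg = B.max' hB :=
  (top_eq_of_gaussianAtoms_mul_eq hρ hA hB hAB (isGreatest_support_gaussianAtoms hB.neg)
    (isGreatest_support_gaussianAtoms hA.neg) (abs_coeff_gaussianAtoms_max' hB.neg)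
    (abs_coeff_gaussianAtoms_max' hA.neg) h).2

theorem neg_eq_of_gaussianAtoms_mul_eq (hρ : ρ ≠ 0) {A B : Finset ℝ} (hA : A.Nonempty)
    (hB : B.Nonempty) (hAB : Disjoint A B)
    (h : gaussianAtoms ρ A * gaussianAtoms ρ (-B) = gaussianAtoms ρ (-A) * gaussianAtoms ρ B) :
    -A = A ∧ -B = B := by
  have hmax : A.max' hA ≠ B.max' hB := fun he =>
    disjoint_left.mp hAB (max'_mem A hA) (he ▸ max'_mem B hB)
  have hB_max' := max'_neg_eq_of_gaussianAtoms_mul_eq hρ hA hB hmax h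
  have hcross : gaussianAtoms ρ A * (gaussianAtoms ρ B - gaussianAtoms ρ (-B)) =
      (gaussianAtoms ρ A - gaussianAtoms ρ (-A)) * gaussianAtoms ρ B := by
    linear_combination -h
  have hA_symm : gaussianAtoms ρ A - gaussianAtoms ρ (-A) = 0 := by
    by_contra hA_asymm
    have hB_asymm : gaussianAtoms ρ B - gaussianAtoms ρ (-B) ≠ 0 := fun hB_symm => by
      rw [hB_symm, mul_zero] at hcross
      exact mul_ne_zero hA_asymm (gaussianAtoms_ne_zero hB) hcross.symm
    have hBtop := isGreatest_support_max' hB_asymm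
    have hAtop := isGreatest_support_max' hA_asymm
    have htop := (top_eq_of_gaussianAtoms_mul_eq hρ hA hB hmax hBtop hAtop
      (abs_coeff_gaussianAtoms_sub (Finsupp.mem_support_iff.mp hBtop.1))
      (abs_coeff_gaussianAtoms_sub (Finsupp.mem_support_iff.mp hAtop.1)) hcross).2
    have hmem := hBtop.1
    rw [htop, Finset.mem_coe, Finsupp.mem_support_iff] at hmem
    apply hmem
    rw [coeff_sub, Finsupp.sub_apply, coeff_gaussianAtoms, coeff_gaussianAtoms,
      if_pos (max'_mem B hB), if_pos (hB_max' ▸ max'_mem (-B) hB.neg), sub_self]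
  have hB_symm : gaussianAtoms ρ B - gaussianAtoms ρ (-B) = 0 := by
    rw [hA_symm, zero_mul] at hcross
    exact (mul_eq_zero.mp hcross).resolve_left (gaussianAtoms_ne_zero hA)
  exact ⟨gaussianAtoms_injective (sub_eq_zero.mp hA_symm).symm,
    gaussianAtoms_injective (sub_eq_zero.mp hB_symm).symm⟩

lemma sum_exp_image_sub {n : ℕ} {e : Fin n → ℝ} (he : Function.Injective e) (y0 y : ℝ) :
    ∑ x ∈ univ.image (e · - y0), exp (-ρ * (y - x) ^ 2) =
      ∑ i, exp (-ρ * (y0 + y - e i) ^ 2) := by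
  rw [sum_image fun i _ j _ hij => he (sub_left_injective hij)]
  exact sum_congr rfl fun i _ => by ring_nf

lemma sum_exp_neg_image_sub {n : ℕ} {e : Fin n → ℝ} (he : Function.Injective e) (y0 y : ℝ) :
    ∑ x ∈ -univ.image (e · - y0), exp (-ρ * (y - x) ^ 2) =
      ∑ i, exp (-ρ * (y0 - y - e i) ^ 2) := by
  rw [sum_neg_index, sum_image fun i _ j _ hij => he (sub_left_injective hij)]
  exact sum_congr rfl fun i _ => by ring_nf

end GaussianAtoms

lemma mul_eq_mul_of_log_div_eq_log_div {a b c d : ℝ} (ha : 0 < a) (hb : 0 < b) (hc : 0 < c)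
    (hd : 0 < d) (h : log (a / b) = log (c / d)) : a * d = c * b :=
  (div_eq_div_iff hb.ne' hd.ne').mp (log_injOn_pos (div_pos ha hb) (div_pos hc hd) h)

lemma eq_neg_rev_of_neg_image_eq {n : ℕ} {a : Fin n → ℝ} (ha : StrictMono a)
    (h : -univ.image a = univ.image a) (i : Fin n) : a i = -a i.rev := by
  have hrev : StrictMono fun i : Fin n => -a i.rev := fun i j hij =>
    neg_lt_neg (ha (Fin.rev_lt_rev.mpr hij))
  have hrange : Set.range (fun i : Fin n => -a i.rev) = Set.range a := by
    have := congrArg (fun s : Finset ℝ => (s : Set ℝ)) h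
    simp only [coe_neg, coe_image, coe_univ, Set.image_univ] at this
    rw [← this, ← Fin.rev_surjective.range_comp, ← Set.image_neg_eq_neg, ← Set.range_comp]
    simp only [Function.comp_def, Fin.rev_rev]
  exact (congrFun ((hrev.range_inj ha).mp hrange) i).symm

/-- Lemma 1 ("only if" direction): if the exact L-value is symmetric around `y0`,
then the constellation is symmetric around `y0` and the pattern is
reflection-symmetric. -/
theorem symm_of_exact_lvalue_symm (n : ℕ) (hn : 0 < n) (d t : Fin n → ℝ)
    (hd : StrictMono d) (ht : StrictMono t) (hdt : ∀ i j, d i ≠ t j)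
    (ρ y0 : ℝ) (hρ : 0 < ρ)
    (hsymm : ∀ y : ℝ,
      Real.log ((∑ i, Real.exp (-ρ * (y0 + y - d i) ^ 2)) /
          (∑ j, Real.exp (-ρ * (y0 + y - t j) ^ 2)))
        = Real.log ((∑ i, Real.exp (-ρ * (y0 - y - d i) ^ 2)) /
          (∑ j, Real.exp (-ρ * (y0 - y - t j) ^ 2)))) :
    (∀ i : Fin n, d i - y0 = -(d i.rev - y0)) ∧
      (∀ j : Fin n, t j - y0 = -(t j.rev - y0)) := by
  have hne : (univ : Finset (Fin n)).Nonempty := univ_nonempty_iff.mpr ⟨⟨0, hn⟩⟩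
  have hpos (e : Fin n → ℝ) (u : ℝ) : 0 < ∑ i, exp (-ρ * (u - e i) ^ 2) :=
    sum_pos (fun i _ => exp_pos _) hne
  set A := univ.image (d · - y0)
  set B := univ.image (t · - y0)
  have hprod : gaussianAtoms ρ A * gaussianAtoms ρ (-B) =
      gaussianAtoms ρ (-A) * gaussianAtoms ρ B :=
    gaussianAtoms_mul_eq_of_forall_sum_exp hρ.ne' fun y => by
      rw [sum_exp_image_sub hd.injective, sum_exp_neg_image_sub hd.injective,
        sum_exp_image_sub ht.injective, sum_exp_neg_image_sub ht.injective]
      exact mul_eq_mul_of_log_div_eq_log_div (hpos _ _) (hpos _ _) (hpos _ _) (hpos _ _) (hsymm y)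
  have hdisj : Disjoint A B := by
    simpa [A, B, disjoint_left] using fun i j h => hdt i j h.symm
  obtain ⟨hA, hB⟩ :=
    neg_eq_of_gaussianAtoms_mul_eq hρ.ne' (hne.image _) (hne.image _) hdisj hprod
  have hmono {e : Fin n → ℝ} (he : StrictMono e) : StrictMono (e · - y0) :=
    fun i j hij => sub_lt_sub_right (he hij) y0
  exact ⟨eq_neg_rev_of_neg_image_eq (hmono hd) hA, eq_neg_rev_of_neg_image_eq (hmono ht) hB⟩
end

section
/- Let S_0 and S_1 be finite nonempty sets of reals with max(S_0) < min(S_1) (pattern of type I: all zeros then all ones). Then the max-log L-value l(y) = ρ[ min_{x∈S_0}(y - x)² - min_{x∈S_1}(y - x)² ], ρ > 0, is a strictly increasing continuous function of y, and hence injective. -/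
open Real Finset

/-- For a type-I pattern (all of `S0` below all of `S1`), the max-log L-value is
strictly increasing, continuous, and hence injective. -/
theorem maxlog_strictMono_of_typeI (S0 S1 : Finset ℝ) (h0 : S0.Nonempty) (h1 : S1.Nonempty)
    (hlt : ∀ x ∈ S0, ∀ x' ∈ S1, x < x') (ρ : ℝ) (hρ : 0 < ρ)
    (l : ℝ → ℝ)
    (hl : ∀ y, l y = ρ * (S0.inf' h0 (fun x => (y - x) ^ 2) -
        S1.inf' h1 (fun x => (y - x) ^ 2))) :
    StrictMono l ∧ Continuous l ∧ Function.Injective l := by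
  have hmono : StrictMono l := by
    intro y1 y2 hy
    rw [hl, hl]
    obtain ⟨b, hb, hbe⟩ := S1.exists_mem_eq_inf' h1 (fun x => (y1 - x) ^ 2)
    obtain ⟨a, ha, hae⟩ := S0.exists_mem_eq_inf' h0 (fun x => (y2 - x) ^ 2)
    have hab : a < b := hlt a ha b hb
    have h10 : S0.inf' h0 (fun x => (y1 - x) ^ 2) ≤ (y1 - a) ^ 2 :=
      Finset.inf'_le _ ha
    have h21 : S1.inf' h1 (fun x => (y2 - x) ^ 2) ≤ (y2 - b) ^ 2 :=
      Finset.inf'_le _ hb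
    nlinarith [mul_lt_mul_of_pos_left (show (y1 - a) ^ 2 - (y1 - b) ^ 2 <
        (y2 - a) ^ 2 - (y2 - b) ^ 2 by nlinarith) hρ]
  have hcont : Continuous l := by
    have : Continuous fun y => ρ * (S0.inf' h0 (fun x => (y - x) ^ 2) -
        S1.inf' h1 (fun x => (y - x) ^ 2)) := by
      apply continuous_const.mul
      apply Continuous.sub
      · exact Continuous.finset_inf'_apply h0 fun i _ => by fun_prop
      · exact Continuous.finset_inf'_apply h1 fun i _ => by fun_prop
    exact this.congr fun y => (hl y).symm
  exact ⟨hmono, hcont, hmono.injective⟩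
end

section
/- Let v > 1 and let d_1 < ... < d_n and t_1 < ... < t_n be reals such that Σ_{i,j} v^{2y(d_i - t_j) - d_i² - t_j²} = Σ_{i,j} v^{2y(t_i - d_j) - t_i² - d_j²} for all y ∈ ℝ. Then comparing the dominant exponents as y → ∞ yields d_n - t_1 = t_n - d_1 and d_n² + t_1² = t_n² + d_1², and consequently d_1 = -d_n and t_1 = -t_n. -/
open Real Finset Filter

lemma aux_tendsto_sum_rpow {ι : Type*} [Fintype ι] (v : ℝ) (hv : 1 < v) (a b : ι → ℝ)
    (M : ℝ) (ha : ∀ i, a i ≤ M) :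
    Tendsto (fun y => ∑ i, v ^ ((a i - M) * y + b i)) atTop
      (nhds (∑ i ∈ Finset.univ.filter (fun i => a i = M), v ^ b i)) := by
  have hv0 : (0:ℝ) < v := lt_trans one_pos hv
  have hrw : (∑ i ∈ Finset.univ.filter (fun i => a i = M), v ^ b i)
      = ∑ i : ι, if a i = M then v ^ b i else 0 := by
    rw [Finset.sum_filter]
  rw [hrw]
  apply tendsto_finset_sum
  intro i _
  by_cases h : a i = M
  · simp only [if_pos h, h, sub_self, zero_mul, zero_add]
    exact tendsto_const_nhds
  · have hlt : a i - M < 0 := sub_neg.mpr (lt_of_le_of_ne (ha i) h)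
    simp only [if_neg h]
    have heq : (fun y => v ^ ((a i - M) * y + b i))
        = fun y => Real.exp (((a i - M) * log v) * y + b i * log v) := by
      funext y
      rw [Real.rpow_def_of_pos hv0]
      ring_nf
    rw [heq]
    apply Real.tendsto_exp_atBot.comp
    apply tendsto_atBot_add_const_right
    have hlog : 0 < Real.log v := Real.log_pos hv
    exact (tendsto_const_mul_atBot_of_neg (mul_neg_of_neg_of_pos hlt hlog)).mpr tendsto_id

/-- Comparing dominant exponents in the symmetry identity of exponential sums
yields the outermost-point symmetry relations. -/
theorem outer_points_symmetric_of_exp_identity (n : ℕ) (v : ℝ) (hv : 1 < v)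
    (d t : Fin (n + 1) → ℝ) (hd : StrictMono d) (ht : StrictMono t)
    (hdt : ∀ i j, d i ≠ t j)
    (hident : ∀ y : ℝ,
      (∑ i, ∑ j, v ^ (2 * y * (d i - t j) - (d i) ^ 2 - (t j) ^ 2))
        = ∑ i, ∑ j, v ^ (2 * y * (t i - d j) - (t i) ^ 2 - (d j) ^ 2)) :
    d (Fin.last n) - t 0 = t (Fin.last n) - d 0 ∧
      (d (Fin.last n)) ^ 2 + (t 0) ^ 2 = (t (Fin.last n)) ^ 2 + (d 0) ^ 2 ∧
      d 0 = -d (Fin.last n) ∧ t 0 = -t (Fin.last n) := by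
  have hv0 : (0:ℝ) < v := lt_trans one_pos hv
  set ι := Fin (n+1) × Fin (n+1)
  set a : ι → ℝ := fun p => 2 * (d p.1 - t p.2) with ha_def
  set b : ι → ℝ := fun p => -(d p.1)^2 - (t p.2)^2 with hb_def
  set a' : ι → ℝ := fun p => 2 * (t p.1 - d p.2) with ha'_def
  set b' : ι → ℝ := fun p => -(t p.1)^2 - (d p.2)^2 with hb'_def
  set p0 : ι := (Fin.last n, 0) with hp0_def
  set A : ℝ := a p0 with hA_def
  set A' : ℝ := a' p0 with hA'_def
  set M : ℝ := max A A' with hM_def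
  -- bounds
  have haA : ∀ p : ι, a p ≤ A := by
    intro p
    have h1 : d p.1 ≤ d (Fin.last n) := hd.monotone (Fin.le_last _)
    have h2 : t 0 ≤ t p.2 := ht.monotone (Fin.zero_le _)
    simp only [ha_def, hA_def, hp0_def]
    nlinarith
  have haA' : ∀ p : ι, a' p ≤ A' := by
    intro p
    have h1 : t p.1 ≤ t (Fin.last n) := ht.monotone (Fin.le_last _)
    have h2 : d 0 ≤ d p.2 := hd.monotone (Fin.zero_le _)
    simp only [ha'_def, hA'_def, hp0_def]
    nlinarith
  have haAeq : ∀ p : ι, a p = A → p = p0 := by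
    intro p hp
    have h1 : d p.1 ≤ d (Fin.last n) := hd.monotone (Fin.le_last _)
    have h2 : t 0 ≤ t p.2 := ht.monotone (Fin.zero_le _)
    have hd1 : d p.1 = d (Fin.last n) := by
      simp only [ha_def, hA_def, hp0_def] at hp; nlinarith
    have ht2 : t p.2 = t 0 := by
      simp only [ha_def, hA_def, hp0_def] at hp; nlinarith
    have : p.1 = Fin.last n := hd.injective hd1
    have : p.2 = 0 := ht.injective ht2
    simp only [hp0_def]
    exact Prod.ext ‹p.1 = Fin.last n› ‹p.2 = 0›
  have haA'eq : ∀ p : ι, a' p = A' → p = p0 := by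
    intro p hp
    have h1 : t p.1 ≤ t (Fin.last n) := ht.monotone (Fin.le_last _)
    have h2 : d 0 ≤ d p.2 := hd.monotone (Fin.zero_le _)
    have ht1 : t p.1 = t (Fin.last n) := by
      simp only [ha'_def, hA'_def, hp0_def] at hp; nlinarith
    have hd2 : d p.2 = d 0 := by
      simp only [ha'_def, hA'_def, hp0_def] at hp; nlinarith
    have : p.1 = Fin.last n := ht.injective ht1
    have : p.2 = 0 := hd.injective hd2
    simp only [hp0_def]
    exact Prod.ext ‹p.1 = Fin.last n› ‹p.2 = 0›
  -- normalized identity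
  have hident' : ∀ y : ℝ,
      (∑ p : ι, v ^ ((a p - M) * y + b p)) = ∑ p : ι, v ^ ((a' p - M) * y + b' p) := by
    intro y
    have e1 : ∀ p : ι, v ^ ((a p - M) * y + b p)
        = v ^ (2 * y * (d p.1 - t p.2) - (d p.1)^2 - (t p.2)^2) * v ^ (-(M * y)) := by
      intro p
      rw [← Real.rpow_add hv0]
      congr 1
      simp only [ha_def, hb_def]
      ring
    have e2 : ∀ p : ι, v ^ ((a' p - M) * y + b' p)
        = v ^ (2 * y * (t p.1 - d p.2) - (t p.1)^2 - (d p.2)^2) * v ^ (-(M * y)) := by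
      intro p
      rw [← Real.rpow_add hv0]
      congr 1
      simp only [ha'_def, hb'_def]
      ring
    simp only [e1, e2, ← Finset.sum_mul]
    congr 1
    rw [Fintype.sum_prod_type, Fintype.sum_prod_type]
    exact hident y
  -- limits
  have hM1 : ∀ p : ι, a p ≤ M := fun p => le_trans (haA p) (le_max_left _ _)
  have hM2 : ∀ p : ι, a' p ≤ M := fun p => le_trans (haA' p) (le_max_right _ _)
  have T1 := aux_tendsto_sum_rpow v hv a b M hM1
  have T2 := aux_tendsto_sum_rpow v hv a' b' M hM2
  have hfun : (fun y => ∑ p : ι, v ^ ((a p - M) * y + b p))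
      = fun y => ∑ p : ι, v ^ ((a' p - M) * y + b' p) := funext hident'
  rw [hfun] at T1
  have hLeq : (∑ p ∈ Finset.univ.filter (fun p => a p = M), v ^ b p)
      = ∑ p ∈ Finset.univ.filter (fun p => a' p = M), v ^ b' p :=
    tendsto_nhds_unique T1 T2
  -- A = A'
  have hAA' : A = A' := by
    by_contra hne
    rcases lt_or_gt_of_ne hne with h | h
    · -- M = A', side 1 filter empty
      have hMA' : M = A' := max_eq_right h.le
      have h1 : Finset.univ.filter (fun p : ι => a p = M) = ∅ := by
        apply Finset.filter_false_of_mem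
        intro p _
        exact ne_of_lt (lt_of_le_of_lt (haA p) (hMA' ▸ h))
      have h2 : p0 ∈ Finset.univ.filter (fun p : ι => a' p = M) := by
        simp [hMA', hA'_def]
      have hpos : (0:ℝ) < ∑ p ∈ Finset.univ.filter (fun p => a' p = M), v ^ b' p :=
        Finset.sum_pos (fun p _ => Real.rpow_pos_of_pos hv0 _) ⟨p0, h2⟩
      rw [h1, Finset.sum_empty] at hLeq
      linarith [hLeq ▸ hpos]
    · have hMA : M = A := max_eq_left h.le
      have h1 : Finset.univ.filter (fun p : ι => a' p = M) = ∅ := by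
        apply Finset.filter_false_of_mem
        intro p _
        exact ne_of_lt (lt_of_le_of_lt (haA' p) (hMA ▸ h))
      have h2 : p0 ∈ Finset.univ.filter (fun p : ι => a p = M) := by
        simp [hMA, hA_def]
      have hpos : (0:ℝ) < ∑ p ∈ Finset.univ.filter (fun p => a p = M), v ^ b p :=
        Finset.sum_pos (fun p _ => Real.rpow_pos_of_pos hv0 _) ⟨p0, h2⟩
      rw [h1, Finset.sum_empty] at hLeq
      linarith
  -- with A = A', M = A = A', filters are {p0}
  have hMA : M = A := by rw [hM_def, hAA', max_self]
  have hf1 : Finset.univ.filter (fun p : ι => a p = M) = {p0} := by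
    ext p
    simp only [Finset.mem_filter, Finset.mem_univ, true_and, Finset.mem_singleton]
    constructor
    · intro hp; exact haAeq p (hMA ▸ hp)
    · intro hp; rw [hp, hMA]
  have hf2 : Finset.univ.filter (fun p : ι => a' p = M) = {p0} := by
    ext p
    simp only [Finset.mem_filter, Finset.mem_univ, true_and, Finset.mem_singleton]
    constructor
    · intro hp; exact haA'eq p ((hMA.trans hAA') ▸ hp)
    · intro hp; rw [hp, hMA, hAA']
  rw [hf1, hf2, Finset.sum_singleton, Finset.sum_singleton] at hLeq
  have hbb' : b p0 = b' p0 := by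
    have : Real.log (v ^ b p0) = Real.log (v ^ b' p0) := by rw [hLeq]
    rw [Real.log_rpow hv0, Real.log_rpow hv0] at this
    have hlog : Real.log v ≠ 0 := ne_of_gt (Real.log_pos hv)
    exact mul_right_cancel₀ hlog this
  -- extract the equalities
  have e1 : d (Fin.last n) - t 0 = t (Fin.last n) - d 0 := by
    have := hAA'
    simp only [hA_def, hA'_def, ha_def, ha'_def, hp0_def] at this
    linarith
  have e2 : (d (Fin.last n))^2 + (t 0)^2 = (t (Fin.last n))^2 + (d 0)^2 := by
    simp only [hb_def, hb'_def, hp0_def] at hbb'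
    linarith
  refine ⟨e1, e2, ?_, ?_⟩
  · -- d 0 = -d (last n)
    have hs : d (Fin.last n) + d 0 = 0 := by
      by_contra hs
      have hsum : d (Fin.last n) + d 0 = t (Fin.last n) + t 0 := by linarith
      have h2 : (d (Fin.last n) - d 0) * (d (Fin.last n) + d 0)
          = (t (Fin.last n) - t 0) * (t (Fin.last n) + t 0) := by nlinarith
      rw [← hsum] at h2
      have hdiff : d (Fin.last n) - d 0 = t (Fin.last n) - t 0 :=
        mul_right_cancel₀ hs h2
      have : d (Fin.last n) = t (Fin.last n) := by linarith
      exact hdt (Fin.last n) (Fin.last n) this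
    linarith
  · have hs : d (Fin.last n) + d 0 = 0 := by
      by_contra hs
      have hsum : d (Fin.last n) + d 0 = t (Fin.last n) + t 0 := by linarith
      have h2 : (d (Fin.last n) - d 0) * (d (Fin.last n) + d 0)
          = (t (Fin.last n) - t 0) * (t (Fin.last n) + t 0) := by nlinarith
      rw [← hsum] at h2
      have hdiff : d (Fin.last n) - d 0 = t (Fin.last n) - t 0 :=
        mul_right_cancel₀ hs h2
      have : d (Fin.last n) = t (Fin.last n) := by linarith
      exact hdt (Fin.last n) (Fin.last n) this
    linarith
end

section
/- Let S_0 = {d : d ∈ S, pattern bit 0} and S_1 have the type-II pattern structure: S is symmetric around y_0 and S_1 = {x ∈ S : |x - y_0| < c} for some threshold c separating the middle M/2 points from the outer M/2 points. Then the max-log L-value l(y) = ρ[ min_{x∈S_0}(y-x)² - min_{x∈S_1}(y-x)² ] satisfies l(y_0 + y) = l(y_0 - y) for all y ∈ ℝ, and l is strictly decreasing on [y_0, ∞). -/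
open Real

/-- For a symmetric constellation with the type-II pattern, the max-log L-value
is symmetric around `y0` and strictly decreasing on `[y0, ∞)`. -/
theorem maxlog_typeII_symmetric_and_strictAnti (M : ℕ) (hM : 4 ≤ M) (hM4 : M % 4 = 0)
    (a : Fin M → ℝ) (ha : StrictMono a) (ρ y0 : ℝ) (hρ : 0 < ρ)
    (hsym : ∀ k : Fin M, a k = 2 * y0 - a k.rev)
    (l : ℝ → ℝ)
    (hl : ∀ y, l y = ρ *
      (sInf ((fun x => (y - x) ^ 2) ''
          (a '' {k : Fin M | k.val < M / 4 ∨ 3 * M / 4 ≤ k.val})) -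
        sInf ((fun x => (y - x) ^ 2) ''
          (a '' {k : Fin M | M / 4 ≤ k.val ∧ k.val < 3 * M / 4})))) :
    (∀ y : ℝ, l (y0 + y) = l (y0 - y)) ∧ StrictAntiOn l (Set.Ici y0) := by
  set S0 : Set (Fin M) := {k : Fin M | k.val < M / 4 ∨ 3 * M / 4 ≤ k.val} with hS0
  set S1 : Set (Fin M) := {k : Fin M | M / 4 ≤ k.val ∧ k.val < 3 * M / 4} with hS1
  have hrev_val : ∀ k : Fin M, (k.rev).val = M - 1 - k.val := by
    intro k; simp [Fin.val_rev]; omega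
  have hrev0 : ∀ k ∈ S0, k.rev ∈ S0 := by
    intro k hk
    simp only [hS0, Set.mem_setOf_eq] at hk ⊢
    have := k.isLt; rw [hrev_val]; omega
  have hrev1 : ∀ k ∈ S1, k.rev ∈ S1 := by
    intro k hk
    simp only [hS1, Set.mem_setOf_eq] at hk ⊢
    have := k.isLt; rw [hrev_val]; omega
  have hrefl : ∀ k : Fin M, a k.rev = 2 * y0 - a k := by
    intro k
    have h1 := hsym k
    linarith
  -- the squared-distance image sets are symmetric under y ↦ 2*y0 - y
  have himg : ∀ (S : Set (Fin M)), (∀ k ∈ S, k.rev ∈ S) → ∀ y : ℝ,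
      (fun x => (y0 + y - x) ^ 2) '' (a '' S) = (fun x => (y0 - y - x) ^ 2) '' (a '' S) := by
    intro S hrev y
    ext z
    constructor
    · rintro ⟨x, ⟨k, hk, rfl⟩, rfl⟩
      exact ⟨a k.rev, ⟨k.rev, hrev k hk, rfl⟩, by rw [hrefl k]; ring⟩
    · rintro ⟨x, ⟨k, hk, rfl⟩, rfl⟩
      exact ⟨a k.rev, ⟨k.rev, hrev k hk, rfl⟩, by rw [hrefl k]; ring⟩
  have hsymm : ∀ y : ℝ, l (y0 + y) = l (y0 - y) := by
    intro y
    rw [hl, hl, himg S0 hrev0 y, himg S1 hrev1 y]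
  refine ⟨hsymm, ?_⟩
  -- basic facts about the image sets
  have hfin : ∀ (S : Set (Fin M)) (y : ℝ),
      ((fun x => (y - x) ^ 2) '' (a '' S)).Finite :=
    fun S y => ((Set.toFinite S).image a).image _
  have h0ne : ∀ y : ℝ, ((fun x => (y - x) ^ 2) '' (a '' S0)).Nonempty := by
    intro y
    refine ⟨(y - a ⟨0, by omega⟩) ^ 2, ⟨a ⟨0, by omega⟩, ⟨⟨0, by omega⟩, ?_, rfl⟩, rfl⟩⟩
    simp only [hS0, Set.mem_setOf_eq]; omega
  have h1ne : ∀ y : ℝ, ((fun x => (y - x) ^ 2) '' (a '' S1)).Nonempty := by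
    intro y
    refine ⟨(y - a ⟨M / 4, by omega⟩) ^ 2,
      ⟨a ⟨M / 4, by omega⟩, ⟨⟨M / 4, by omega⟩, ?_, rfl⟩, rfl⟩⟩
    simp only [hS1, Set.mem_setOf_eq]; omega
  have hle : ∀ (S : Set (Fin M)) (y : ℝ) (k : Fin M), k ∈ S →
      sInf ((fun x => (y - x) ^ 2) '' (a '' S)) ≤ (y - a k) ^ 2 := by
    intro S y k hk
    exact csInf_le (hfin S y).bddBelow ⟨a k, ⟨k, hk, rfl⟩, rfl⟩
  have hmem0 : ∀ y : ℝ, ∃ k ∈ S0,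
      sInf ((fun x => (y - x) ^ 2) '' (a '' S0)) = (y - a k) ^ 2 := by
    intro y
    obtain ⟨x, ⟨k, hk, rfl⟩, hz⟩ := (h0ne y).csInf_mem (hfin S0 y)
    exact ⟨k, hk, hz.symm⟩
  have hmem1 : ∀ y : ℝ, ∃ k ∈ S1,
      sInf ((fun x => (y - x) ^ 2) '' (a '' S1)) = (y - a k) ^ 2 := by
    intro y
    obtain ⟨x, ⟨k, hk, rfl⟩, hz⟩ := (h1ne y).csInf_mem (hfin S1 y)
    exact ⟨k, hk, hz.symm⟩
  intro y1 hy1 y2 hy2 h12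
  simp only [Set.mem_Ici] at hy1 hy2
  -- get a minimizer of the outer set at y1 which is a *right* outer point
  obtain ⟨c0, hc0, hc0e⟩ := hmem0 y1
  have hC : ∃ c : Fin M, 3 * M / 4 ≤ c.val ∧
      sInf ((fun x => (y1 - x) ^ 2) '' (a '' S0)) = (y1 - a c) ^ 2 := by
    rcases (show c0.val < M / 4 ∨ 3 * M / 4 ≤ c0.val from hc0) with h | h
    · -- left outer point: its reflection is at least as close
      refine ⟨c0.rev, by rw [hrev_val]; have := c0.isLt; omega, ?_⟩
      have hlt : (c0 : Fin M) < c0.rev := by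
        rw [Fin.lt_iff_val_lt_val, hrev_val]; have := c0.isLt; omega
      have hac : a c0 < y0 := by
        have := ha hlt
        have := hsym c0
        linarith
      have h1 : (y1 - a c0.rev) ^ 2 ≤ (y1 - a c0) ^ 2 := by
        rw [hrefl c0]
        nlinarith [mul_nonneg (sub_nonneg.2 hy1) (sub_pos.2 hac).le]
      have h2 := hle S0 y1 c0.rev (hrev0 c0 hc0)
      rw [hc0e] at h2 ⊢
      exact le_antisymm h2 h1
    · exact ⟨c0, h, hc0e⟩
  obtain ⟨c, hc, hce⟩ := hC
  obtain ⟨b, hb, hbe⟩ := hmem1 y2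
  -- key ordering: a b < a c
  have hbc : a b < a c := by
    apply ha
    rw [Fin.lt_iff_val_lt_val]
    rcases hb with ⟨_, hb2⟩
    omega
  have hI02 := hle S0 y2 c (by simp only [hS0, Set.mem_setOf_eq]; right; exact hc)
  have hI11 := hle S1 y1 b hb
  rw [hl y1, hl y2]
  have hfinal :
      sInf ((fun x => (y2 - x) ^ 2) '' (a '' S0)) -
        sInf ((fun x => (y2 - x) ^ 2) '' (a '' S1)) <
      sInf ((fun x => (y1 - x) ^ 2) '' (a '' S0)) -
        sInf ((fun x => (y1 - x) ^ 2) '' (a '' S1)) := by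
    rw [hce, hbe]
    nlinarith [mul_pos (sub_pos.2 h12) (sub_pos.2 hbc)]
  exact (mul_lt_mul_iff_right₀ hρ).2 hfinal
end

section
/- Let L_1, ..., L_m be real random variables with conditional densities f_{L_j|B_j}(·|b), b ∈ {0,1}, B_j uniform. Define the mixed channel density f̃(l|b) = (1/m) Σ_{j=1}^m f_{L_j|B_j}(l|b), and let (B̃, L̃) be distributed accordingly with B̃ uniform. Then m·GMI_{L̃} = m - inf_{s≥0} Σ_{j=1}^m E[log₂(1 + e^{-s(-1)^{B_j+1}L_j})]; i.e., the sum of m copies of the mixed-channel GMI equals the BICM GMI of the original collection (channel mixing preserves the BICM GMI). -/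
open Real MeasureTheory Finset
open scoped Pointwise

/-- `h(x) = log₂(1 + e^{-x})`. -/
noncomputable def hfun (x : ℝ) : ℝ := Real.logb 2 (1 + Real.exp (-x))

/-!
For every `s`, the objective of the mixed channel is `1/m` times the sum of the objectives of the
individual channels, by linearity of the integral in the mixture density. Scaling the objective
by `m ≥ 0` scales its infimum over `s ≥ 0` by `m`.
-/

theorem integral_const_mul_sum_mul {α ι : Type*} [MeasurableSpace α] {μ : Measure α}
    (s : Finset ι) (c : ℝ) {f : ι → α → ℝ} {g : α → ℝ}
    (hfg : ∀ j ∈ s, Integrable (fun l => f j l * g l) μ) :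
    ∫ l, (c * ∑ j ∈ s, f j l) * g l ∂μ = c * ∑ j ∈ s, ∫ l, f j l * g l ∂μ := by
  simp_rw [mul_assoc, Finset.sum_mul]
  rw [integral_const_mul, integral_finsetSum s hfg]

theorem card_mul_mean_eq_sum {ι : Type*} (s : Finset ι) (x : ι → ℝ) :
    (#s : ℝ) * (1 / #s * ∑ j ∈ s, x j) = ∑ j ∈ s, x j := by
  rcases s.eq_empty_or_nonempty with rfl | hs
  · simp
  · field_simp

theorem sInf_setOf_mul {ι : Type*} {c : ℝ} (hc : 0 ≤ c) (p : ι → Prop) (F : ι → ℝ) :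
    sInf {x : ℝ | ∃ s, p s ∧ x = c * F s} = c * sInf {x : ℝ | ∃ s, p s ∧ x = F s} := by
  have hset : {x : ℝ | ∃ s, p s ∧ x = c * F s} = c • {x : ℝ | ∃ s, p s ∧ x = F s} := by
    ext x
    constructor
    · rintro ⟨s, hs, rfl⟩
      exact ⟨F s, ⟨s, hs, rfl⟩, rfl⟩
    · rintro ⟨y, ⟨s, hs, rfl⟩, rfl⟩
      exact ⟨s, hs, rfl⟩
  rw [hset, Real.sInf_smul_of_nonneg hc, smul_eq_mul]

theorem channel_mixing_preserves_gmi_general (m : ℕ)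
    (f : Fin m → Bool → ℝ → ℝ)
    (hintg : ∀ (s : ℝ) (j : Fin m),
      Integrable (fun l => f j false l * hfun (-(s * l))) ∧
      Integrable (fun l => f j true l * hfun (s * l))) :
    (m : ℝ) * (1 - sInf {x : ℝ | ∃ s, 0 ≤ s ∧ x =
        (1/2) * (∫ l, ((1 / (m : ℝ)) * ∑ j, f j false l) * hfun (-(s * l))) +
          (1/2) * (∫ l, ((1 / (m : ℝ)) * ∑ j, f j true l) * hfun (s * l))})
      = (m : ℝ) - sInf {x : ℝ | ∃ s, 0 ≤ s ∧ x =
        ∑ j, ((1/2) * (∫ l, f j false l * hfun (-(s * l))) +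
          (1/2) * (∫ l, f j true l * hfun (s * l)))} := by
  have hmix : ∀ s : ℝ,
      ∑ j, ((1/2) * (∫ l, f j false l * hfun (-(s * l))) +
          (1/2) * (∫ l, f j true l * hfun (s * l)))
        = (m : ℝ) * ((1/2) * (∫ l, ((1 / (m : ℝ)) * ∑ j, f j false l) * hfun (-(s * l))) +
          (1/2) * (∫ l, ((1 / (m : ℝ)) * ∑ j, f j true l) * hfun (s * l))) := by
    intro s
    rw [integral_const_mul_sum_mul _ _ fun j _ => (hintg s j).1,
      integral_const_mul_sum_mul _ _ fun j _ => (hintg s j).2]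
    have hmean := card_mul_mean_eq_sum univ fun j : Fin m =>
      (1/2) * (∫ l, f j false l * hfun (-(s * l))) + (1/2) * (∫ l, f j true l * hfun (s * l))
    rw [card_univ, Fintype.card_fin, sum_add_distrib, ← mul_sum, ← mul_sum] at hmean
    rw [sum_add_distrib, ← mul_sum, ← mul_sum, ← hmean]
    ring
  simp_rw [hmix]
  rw [sInf_setOf_mul (Nat.cast_nonneg m)]
  ring

/-- Theorem 4: channel mixing preserves the BICM GMI; `m` copies of the
mixed-channel GMI equal the BICM GMI of the original collection. -/
theorem channel_mixing_preserves_gmi (m : ℕ) (hm : 0 < m)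
    (f : Fin m → Bool → ℝ → ℝ)
    (hf : ∀ j b l, 0 ≤ f j b l) (hint : ∀ j b, ∫ l, f j b l = 1)
    (hintg : ∀ (s : ℝ) (j : Fin m),
      Integrable (fun l => f j false l * hfun (-(s * l))) ∧
      Integrable (fun l => f j true l * hfun (s * l))) :
    (m : ℝ) * (1 - sInf {x : ℝ | ∃ s, 0 ≤ s ∧ x =
        (1/2) * (∫ l, ((1 / (m : ℝ)) * ∑ j, f j false l) * hfun (-(s * l))) +
          (1/2) * (∫ l, ((1 / (m : ℝ)) * ∑ j, f j true l) * hfun (s * l))})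
      = (m : ℝ) - sInf {x : ℝ | ∃ s, 0 ≤ s ∧ x =
        ∑ j, ((1/2) * (∫ l, f j false l * hfun (-(s * l))) +
          (1/2) * (∫ l, f j true l * hfun (s * l)))} :=
  channel_mixing_preserves_gmi_general m f hintg
end
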